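/- Let μ : ω → ℝ and let ψ : [0,1] → [0,∞) be essentially increasing on [0,1] with ψ(1/2) > 0, and suppose there is λ > 0 such that ψ(1/2^{2n}) ≥ λ·ψ(1/2^n) for every n < ω. If there are 0 ≤ ε < 1, n₀ < ω and M ≥ 1 such that 1/M ≤ μ(i) ≤ 2^{εn} whenever n₀ ≤ i ≤ n < ω and μ(i) ≠ 0, then there exist K ≥ 1 and n₁ with n₀ ≤ n₁ < ω such that ψ(1/2^n)/K ≤ ψ(μ(i)/2^n) ≤ K·ψ(1/2^n) whenever n₁ ≤ i ≤ n < ω and μ(i) ≠ 0. -/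

import Mathlib

open Set

/-- `f` is essentially increasing on `D`: for some `C ≥ 1`,
`x ≤ y` implies `f x ≤ C * f y` for `x, y ∈ D`. -/
def EssIncOn (f : ℝ → ℝ) (D : Set ℝ) : Prop :=
  ∃ C : ℝ, 1 ≤ C ∧ ∀ x ∈ D, ∀ y ∈ D, x ≤ y → f x ≤ C * f y

/-- `(f x)_{x ∈ D} ≈ (g x)_{x ∈ D}`: for some `C ≥ 1`,
`g x / C ≤ f x ≤ C * g x` for all `x ∈ D`. -/
def EquivOn (f g : ℝ → ℝ) (D : Set ℝ) : Prop :=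
  ∃ C : ℝ, 1 ≤ C ∧ ∀ x ∈ D, g x / C ≤ f x ∧ f x ≤ C * g x

/-- `(u n) ≈ (v n)`: for some `C ≥ 1`, `v n / C ≤ u n ≤ C * v n` for all `n`. -/
def SeqEquiv (u v : ℕ → ℝ) : Prop :=
  ∃ C : ℝ, 1 ≤ C ∧ ∀ n, v n / C ≤ u n ∧ u n ≤ C * v n

/-!
Write `C` for the constant of essential monotonicity of `ψ` and `λ` for the doubling constant.
For the lower bound, once `2 ^ n ≥ M` we have `μ i / 2 ^ n ≥ 2 ^ (-2n)`, so
`ψ (μ i / 2 ^ n) ≥ ψ (2 ^ (-2n)) / C ≥ λ ψ (2 ^ (-n)) / C`.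
For the upper bound, `μ i / 2 ^ n ≤ 2 ^ (-m)` with `m = ⌊(1 - ε) n⌋`, and a fixed number `k` of
doublings brings `2 ^ (-m)` below `2 ^ (-n)`, because `2 ^ k (1 - ε) > 2`; iterating the doubling
condition `k` times gives `ψ (μ i / 2 ^ n) ≤ C ² λ ^ (-k) ψ (2 ^ (-n))`.
-/

lemma pow_mul_le_of_mul_le_two_mul {u : ℕ → ℝ} {lam : ℝ} (hlam : 0 ≤ lam)
    (h : ∀ n, lam * u n ≤ u (2 * n)) (k m : ℕ) : lam ^ k * u m ≤ u (2 ^ k * m) := by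
  induction k with
  | zero => simp
  | succ k ih =>
    calc lam ^ (k + 1) * u m = lam * (lam ^ k * u m) := by ring
      _ ≤ lam * u (2 ^ k * m) := mul_le_mul_of_nonneg_left ih hlam
      _ ≤ u (2 * (2 ^ k * m)) := h _
      _ = u (2 ^ (k + 1) * m) := by rw [pow_succ, mul_comm _ 2, mul_assoc]

lemma exists_le_two_pow_mul_floor_mul {δ : ℝ} (hδ : 0 < δ) :
    ∃ k : ℕ, ∀ n : ℕ, 2 ^ k ≤ n → n ≤ 2 ^ k * ⌊δ * n⌋₊ := by
  obtain ⟨k, hk⟩ := pow_unbounded_of_one_lt (2 / δ) one_lt_two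
  refine ⟨k, fun n hn => ?_⟩
  have hkδ : 2 < δ * 2 ^ k := by rwa [div_lt_iff₀' hδ] at hk
  have hn' : (2 : ℝ) ^ k ≤ n := by exact_mod_cast hn
  have hfloor : δ * n - 1 < ⌊δ * n⌋₊ := by linarith [Nat.lt_floor_add_one (δ * n)]
  have : (n : ℝ) ≤ 2 ^ k * ⌊δ * n⌋₊ := by
    nlinarith [mul_lt_mul_of_pos_left hfloor (by positivity : (0 : ℝ) < 2 ^ k)]
  exact_mod_cast this

lemma div_two_pow_le_half_pow {x ε : ℝ} {m n : ℕ} (hx : x ≤ (2 : ℝ) ^ (ε * n))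
    (hm : (m : ℝ) ≤ (1 - ε) * n) : x / 2 ^ n ≤ (1 / 2 : ℝ) ^ m := by
  have h : (2 : ℝ) ^ (ε * n) ≤ 2 ^ n / 2 ^ m := by
    rw [← Real.rpow_natCast, ← Real.rpow_natCast, ← Real.rpow_sub two_pos]
    exact Real.rpow_le_rpow_of_exponent_le one_le_two (by linarith)
  rw [div_le_iff₀ (by positivity), one_div_pow, one_div_mul_eq_div]
  exact hx.trans h

lemma half_pow_mem_Icc (n : ℕ) : (1 / 2 : ℝ) ^ n ∈ Icc (0 : ℝ) 1 :=
  ⟨by positivity, pow_le_one₀ (by norm_num) (by norm_num)⟩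

lemma le_mul_of_mul_le_of_div_le {x y c d K : ℝ} (hc : 0 < c) (hy : 0 ≤ y)
    (h : c * x ≤ d * y) (hK : d / c ≤ K) : x ≤ K * y :=
  calc x ≤ d / c * y := by rw [div_mul_eq_mul_div, le_div_iff₀ hc]; linarith
    _ ≤ K * y := mul_le_mul_of_nonneg_right hK hy

section Dyadic

variable {ψ : ℝ → ℝ} {C lam : ℝ}
  (hC : ∀ x ∈ Icc (0 : ℝ) 1, ∀ y ∈ Icc (0 : ℝ) 1, x ≤ y → ψ x ≤ C * ψ y)
  (hlam : ∀ n : ℕ, lam * ψ ((1 / 2 : ℝ) ^ n) ≤ ψ ((1 / 2 : ℝ) ^ (2 * n)))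
include hC hlam

lemma mul_apply_half_pow_le_of_half_pow_le {n : ℕ} {x : ℝ} (hx : x / 2 ^ n ∈ Icc (0 : ℝ) 1)
    (hxn : (1 / 2 : ℝ) ^ n ≤ x) : lam * ψ ((1 / 2 : ℝ) ^ n) ≤ C * ψ (x / 2 ^ n) := by
  have hle : (1 / 2 : ℝ) ^ (2 * n) ≤ x / 2 ^ n := by
    rw [two_mul, pow_add, one_div_pow, one_div_mul_eq_div]
    exact div_le_div_of_nonneg_right (by rwa [one_div_pow] at hxn) (by positivity)
  exact (hlam n).trans (hC _ (half_pow_mem_Icc _) _ hx hle)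

lemma pow_mul_apply_le_sq_mul_apply_half_pow {k m n : ℕ} (hC0 : 0 ≤ C) (hlam0 : 0 ≤ lam)
    (hn : n ≤ 2 ^ k * m) {y : ℝ} (hy : y ∈ Icc (0 : ℝ) 1) (hym : y ≤ (1 / 2 : ℝ) ^ m) :
    lam ^ k * ψ y ≤ C ^ 2 * ψ ((1 / 2 : ℝ) ^ n) := by
  have hiter := pow_mul_le_of_mul_le_two_mul (u := fun n => ψ ((1 / 2 : ℝ) ^ n)) hlam0 hlam k m
  have hmono : ψ ((1 / 2 : ℝ) ^ (2 ^ k * m)) ≤ C * ψ ((1 / 2 : ℝ) ^ n) :=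
    hC _ (half_pow_mem_Icc _) _ (half_pow_mem_Icc _)
      (pow_le_pow_of_le_one (by norm_num) (by norm_num) hn)
  calc lam ^ k * ψ y ≤ lam ^ k * (C * ψ ((1 / 2 : ℝ) ^ m)) :=
        mul_le_mul_of_nonneg_left (hC _ hy _ (half_pow_mem_Icc _) hym) (by positivity)
    _ = C * (lam ^ k * ψ ((1 / 2 : ℝ) ^ m)) := by ring
    _ ≤ C * (C * ψ ((1 / 2 : ℝ) ^ n)) := mul_le_mul_of_nonneg_left (hiter.trans hmono) hC0
    _ = C ^ 2 * ψ ((1 / 2 : ℝ) ^ n) := by ring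

end Dyadic

theorem stmt9_general (μ : ℕ → ℝ) (ψ : ℝ → ℝ)
    (hψnn : ∀ t ∈ Icc (0:ℝ) 1, 0 ≤ ψ t)
    (hψei : EssIncOn ψ (Icc 0 1))
    (hlam : ∃ lam > (0:ℝ), ∀ n : ℕ, lam * ψ ((1/2:ℝ)^n) ≤ ψ ((1/2:ℝ)^(2*n)))
    (ε : ℝ) (hε1 : ε < 1) (n₀ : ℕ) (M : ℝ) (hM : 1 ≤ M)
    (hμ : ∀ i n : ℕ, n₀ ≤ i → i ≤ n → μ i ≠ 0 →
      1 / M ≤ μ i ∧ μ i ≤ (2:ℝ) ^ (ε * n)) :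
    ∃ K : ℝ, 1 ≤ K ∧ ∃ n₁ : ℕ, n₀ ≤ n₁ ∧ ∀ i n : ℕ, n₁ ≤ i → i ≤ n → μ i ≠ 0 →
      ψ ((1/2:ℝ)^n) / K ≤ ψ (μ i / 2^n) ∧ ψ (μ i / 2^n) ≤ K * ψ ((1/2:ℝ)^n) := by
  obtain ⟨C, hC1, hC⟩ := hψei
  obtain ⟨lam, hlam0, hlam⟩ := hlam
  obtain ⟨k, hk⟩ := exists_le_two_pow_mul_floor_mul (sub_pos.2 hε1)
  obtain ⟨N, hN⟩ := pow_unbounded_of_one_lt M one_lt_two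
  set K := max 1 (max (C / lam) (C ^ 2 / lam ^ k))
  refine ⟨K, le_max_left _ _, max n₀ (max (2 ^ k) N), le_max_left _ _, fun i n hi hin hne => ?_⟩
  obtain ⟨hμlo, hμhi⟩ := hμ i n (by omega) hin hne
  set m := ⌊(1 - ε) * n⌋₊
  have hxm : μ i / 2 ^ n ≤ (1 / 2 : ℝ) ^ m := div_two_pow_le_half_pow hμhi
    (Nat.floor_le (mul_nonneg (sub_pos.2 hε1).le n.cast_nonneg))
  have hMn : M ≤ 2 ^ n := hN.le.trans (pow_le_pow_right₀ one_le_two (by omega))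
  have hμn : (1 / 2 : ℝ) ^ n ≤ μ i := by
    rw [one_div_pow]
    exact (one_div_le_one_div_of_le (by linarith) hMn).trans hμlo
  have hx : μ i / 2 ^ n ∈ Icc (0 : ℝ) 1 :=
    ⟨div_nonneg ((half_pow_mem_Icc n).1.trans hμn) (by positivity),
      hxm.trans (half_pow_mem_Icc m).2⟩
  constructor
  · rw [div_le_iff₀ (by positivity), mul_comm]
    exact le_mul_of_mul_le_of_div_le hlam0 (hψnn _ hx)
      (mul_apply_half_pow_le_of_half_pow_le hC hlam hx hμn)
      ((le_max_left _ _).trans (le_max_right _ _))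
  · exact le_mul_of_mul_le_of_div_le (by positivity) (hψnn _ (half_pow_mem_Icc n))
      (pow_mul_apply_le_sq_mul_apply_half_pow hC hlam (by linarith) hlam0.le (hk n (by omega))
        hx hxm)
      ((le_max_right _ _).trans (le_max_right _ _))

theorem stmt9 (μ : ℕ → ℝ) (ψ : ℝ → ℝ)
    (hψnn : ∀ t ∈ Icc (0:ℝ) 1, 0 ≤ ψ t)
    (hψei : EssIncOn ψ (Icc 0 1)) (hhalf : 0 < ψ (1/2))
    (hlam : ∃ lam > (0:ℝ), ∀ n : ℕ, lam * ψ ((1/2:ℝ)^n) ≤ ψ ((1/2:ℝ)^(2*n)))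
    (ε : ℝ) (hε0 : 0 ≤ ε) (hε1 : ε < 1) (n₀ : ℕ) (M : ℝ) (hM : 1 ≤ M)
    (hμ : ∀ i n : ℕ, n₀ ≤ i → i ≤ n → μ i ≠ 0 →
      1 / M ≤ μ i ∧ μ i ≤ (2:ℝ) ^ (ε * n)) :
    ∃ K : ℝ, 1 ≤ K ∧ ∃ n₁ : ℕ, n₀ ≤ n₁ ∧ ∀ i n : ℕ, n₁ ≤ i → i ≤ n → μ i ≠ 0 →
      ψ ((1/2:ℝ)^n) / K ≤ ψ (μ i / 2^n) ∧ ψ (μ i / 2^n) ≤ K * ψ ((1/2:ℝ)^n) :=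
  stmt9_general μ ψ hψnn hψei hlam ε hε1 n₀ M hM hμ
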